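/- arXiv:2510.21595 — 3 statements merged into one kernel-verified Lean document; each statement's English description precedes it below -/
import Mathlib

section
/- Let A > 0 and let (θ_k) be a sequence in [0,1] indexed by k ≥ k₀ satisfying θ_{k₀} ≤ A/(2^{k₀})², and for all k ≥ k₀, θ_{k+1} ≤ (1/8)θ_k + (√A/(2·2^{k+1}))·√(θ_{k+1}). Then θ_k ≤ A/(2^k)² for all k ≥ k₀. -/
/-!
Write `b_k = A / (2^k)²`, so that `b_k = 4 b_{k+1}` and the coefficient in the recursion is
`√b_{k+1} / 2`. If `θ_k ≤ b_k`, the recursion gives, with `x = √θ_{k+1}` and `t = √b_{k+1}`,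
`x² ≤ t²/2 + t x / 2`, i.e. `(x - t)(x + t/2) ≤ 0`, whence `x ≤ t` and `θ_{k+1} ≤ b_{k+1}`.
-/

lemma le_of_sq_le_half_sq_add_half_mul {x t : ℝ} (ht : 0 ≤ t)
    (h : x ^ 2 ≤ t ^ 2 / 2 + t / 2 * x) : x ≤ t := by
  nlinarith [sq_nonneg (x + t / 2)]

lemma le_of_le_div_eight_add_sqrt_mul_sqrt {θ θ' b : ℝ} (hθ : 0 ≤ θ) (hθb : θ ≤ 4 * b)
    (hrec : θ' ≤ θ / 8 + √b / 2 * √θ') : θ' ≤ b := by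
  rcases lt_or_ge θ' 0 with hθ' | hθ'
  · linarith
  have hb : 0 ≤ b := by linarith
  have hroot : √θ' ≤ √b := by
    refine le_of_sq_le_half_sq_add_half_mul (Real.sqrt_nonneg _) ?_
    rw [Real.sq_sqrt hθ', Real.sq_sqrt hb]
    linarith
  exact (Real.sqrt_le_sqrt_iff hb).1 hroot

theorem stmt0_general (A : ℝ) (θ : ℕ → ℝ) (k₀ : ℕ)
    (hrange : ∀ k, k₀ ≤ k → 0 ≤ θ k ∧ θ k ≤ 1)
    (hbase : θ k₀ ≤ A / ((2 : ℝ) ^ k₀) ^ 2)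
    (hrec : ∀ k, k₀ ≤ k →
      θ (k + 1) ≤ (1 / 8) * θ k
        + (Real.sqrt A / (2 * (2 : ℝ) ^ (k + 1))) * Real.sqrt (θ (k + 1))) :
    ∀ k, k₀ ≤ k → θ k ≤ A / ((2 : ℝ) ^ k) ^ 2 := by
  intro k hk
  induction k, hk using Nat.le_induction with
  | base => exact hbase
  | succ k hk ih =>
    have hbound : A / ((2 : ℝ) ^ k) ^ 2 = 4 * (A / ((2 : ℝ) ^ (k + 1)) ^ 2) := by
      field_simp; ring
    have hcoeff : Real.sqrt A / (2 * (2 : ℝ) ^ (k + 1)) = √(A / ((2 : ℝ) ^ (k + 1)) ^ 2) / 2 := by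
      rw [Real.sqrt_div' A (by positivity), Real.sqrt_sq (by positivity)]; ring
    refine le_of_le_div_eight_add_sqrt_mul_sqrt (hrange k hk).1 (hbound ▸ ih) ?_
    simpa only [hcoeff, one_div_mul_eq_div] using hrec k hk

/-- Induction lemma for the one-arm upper bound: a sequence `θ` in `[0,1]`
satisfying the renormalisation recursion `θ_{k+1} ≤ θ_k/8 + (√A/(2·2^{k+1}))√θ_{k+1}`
and the base bound `θ_{k₀} ≤ A/(2^{k₀})²` satisfies `θ_k ≤ A/(2^k)²` for all `k ≥ k₀`. -/
theorem stmt0 (A : ℝ) (hA : 0 < A) (θ : ℕ → ℝ) (k₀ : ℕ)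
    (hrange : ∀ k, k₀ ≤ k → 0 ≤ θ k ∧ θ k ≤ 1)
    (hbase : θ k₀ ≤ A / ((2 : ℝ) ^ k₀) ^ 2)
    (hrec : ∀ k, k₀ ≤ k →
      θ (k + 1) ≤ (1 / 8) * θ k
        + (Real.sqrt A / (2 * (2 : ℝ) ^ (k + 1))) * Real.sqrt (θ (k + 1))) :
    ∀ k, k₀ ≤ k → θ k ≤ A / ((2 : ℝ) ^ k) ^ 2 :=
  stmt0_general A θ k₀ hrange hbase hrec
end

section
/- For all p ∈ [0,1] and n ≥ 0, in spread-out Bernoulli percolation, φ_p(Λ_n) ≤ 2d·φ_p(H_n), where Λ_n = [-n,n]^d ∩ ℤ^d, H_n = ({-n,-n+1,...} × ℤ^{d-1}), and φ_p(S) := p Σ_{x∈S, y∉S, x~y} P_p[0 ↔ x inside S]. In particular, if φ_{p_c}(Λ_n) ≥ 1 for every n ≥ 1, then φ_{p_c}(H_n) ≥ 1/(2d). -/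
open MeasureTheory
open scoped ENNReal

/-- Spread-out adjacency: `x ~ y` iff `x ≠ y` and `|x - y|_∞ ≤ L`. -/
def adjSO (d L : ℕ) (x y : Fin d → ℤ) : Prop :=
  x ≠ y ∧ ∀ i, |x i - y i| ≤ (L : ℤ)

/-- `a` and `b` are connected by an open path inside `S` in the configuration `ω`. -/
def connIn (d L : ℕ) (S : Set (Fin d → ℤ)) (ω : Sym2 (Fin d → ℤ) → Bool)
    (a b : Fin d → ℤ) : Prop :=
  a ∈ S ∧ b ∈ S ∧
    Relation.ReflTransGen
      (fun u v => u ∈ S ∧ v ∈ S ∧ adjSO d L u v ∧ ω s(u, v) = true) a b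

/-- Restricted two-point function `τ^S(0,x)`. -/
noncomputable def tauSO (d L : ℕ) (μ : Measure (Sym2 (Fin d → ℤ) → Bool))
    (S : Set (Fin d → ℤ)) (x : Fin d → ℤ) : ℝ≥0∞ :=
  μ {ω | connIn d L S ω 0 x}

/-- `φ_p(S) = p Σ_{x ∈ S, y ∉ S, x ~ y} τ^S(0,x)`. -/
noncomputable def phiSO (d L : ℕ) (μ : Measure (Sym2 (Fin d → ℤ) → Bool)) (p : ℝ≥0∞)
    (S : Set (Fin d → ℤ)) : ℝ≥0∞ :=
  p * ∑' q : {q : (Fin d → ℤ) × (Fin d → ℤ) // q.1 ∈ S ∧ q.2 ∉ S ∧ adjSO d L q.1 q.2},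
      tauSO d L μ S q.val.1

/-- The box `Λ_n = [-n,n]^d ∩ ℤ^d`. -/
def boxSO (d : ℕ) (n : ℕ) : Set (Fin d → ℤ) := {x | ∀ i, |x i| ≤ (n : ℤ)}

/-- The translated half-space `H_n = {x : x₁ ≥ -n}`. -/
def halfSpaceSO (d : ℕ) (hd : 0 < d) (n : ℕ) : Set (Fin d → ℤ) :=
  {x | -(n : ℤ) ≤ x ⟨0, hd⟩}

/-- Signed permutations of the coordinates (lattice symmetries fixing the origin). -/
def IsSignedPerm (d : ℕ) (g : (Fin d → ℤ) → (Fin d → ℤ)) : Prop :=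
  ∃ (σ : Equiv.Perm (Fin d)) (ε : Fin d → ℤ),
    (∀ i, ε i = 1 ∨ ε i = -1) ∧ ∀ x i, g x i = ε i * x (σ i)

/-!
The box `Λ_n` is the intersection of the `2d` half-spaces `{x | -n ≤ s * x i}` (`s = ±1`), each
the image of `H_n` under a signed coordinate swap. An edge leaving `Λ_n` leaves one of them, and
`τ^{Λ_n} ≤ τ^T` for each of them `T`, so `φ_p(Λ_n) ≤ Σ_T φ_p(T)`; by symmetry every term equals
`φ_p(H_n)`.
-/

def exitEdges (d L : ℕ) (S : Set (Fin d → ℤ)) : Set ((Fin d → ℤ) × (Fin d → ℤ)) :=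
  {q | q.1 ∈ S ∧ q.2 ∉ S ∧ adjSO d L q.1 q.2}

noncomputable def exitWeight (d L : ℕ) (μ : Measure (Sym2 (Fin d → ℤ) → Bool))
    (S : Set (Fin d → ℤ)) : (Fin d → ℤ) × (Fin d → ℤ) → ℝ≥0∞ :=
  (exitEdges d L S).indicator fun q => tauSO d L μ S q.1

section Phi

variable {d L : ℕ} {μ : Measure (Sym2 (Fin d → ℤ) → Bool)} {p : ℝ≥0∞}

lemma connIn_mono {S T : Set (Fin d → ℤ)} (hST : S ⊆ T) {ω : Sym2 (Fin d → ℤ) → Bool}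
    {a b : Fin d → ℤ} (h : connIn d L S ω a b) : connIn d L T ω a b :=
  ⟨hST h.1, hST h.2.1,
    Relation.ReflTransGen.mono (fun _ _ huv => ⟨hST huv.1, hST huv.2.1, huv.2.2⟩) _ _ h.2.2⟩

lemma tauSO_mono {S T : Set (Fin d → ℤ)} (hST : S ⊆ T) (x : Fin d → ℤ) :
    tauSO d L μ S x ≤ tauSO d L μ T x :=
  measure_mono fun _ hω => connIn_mono hST hω

lemma phiSO_eq_tsum_exitWeight (S : Set (Fin d → ℤ)) :
    phiSO d L μ p S = p * ∑' q, exitWeight d L μ S q :=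
  congrArg (p * ·) (tsum_subtype (exitEdges d L S) fun q => tauSO d L μ S q.1)

lemma exitWeight_iInter_le_sum {ι : Type*} [Fintype ι] (T : ι → Set (Fin d → ℤ))
    (q : (Fin d → ℤ) × (Fin d → ℤ)) :
    exitWeight d L μ (⋂ k, T k) q ≤ ∑ k, exitWeight d L μ (T k) q := by
  by_cases hq : q ∈ exitEdges d L (⋂ k, T k)
  · have ⟨hq₁, hq₂, hadj⟩ := hq
    obtain ⟨k, hk⟩ : ∃ k, q.2 ∉ T k := by simpa using hq₂
    have hqk : q ∈ exitEdges d L (T k) := ⟨Set.mem_iInter.mp hq₁ k, hk, hadj⟩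
    calc exitWeight d L μ (⋂ k, T k) q = tauSO d L μ (⋂ k, T k) q.1 := Set.indicator_of_mem hq _
      _ ≤ tauSO d L μ (T k) q.1 := tauSO_mono (Set.iInter_subset T k) q.1
      _ = exitWeight d L μ (T k) q := by rw [exitWeight, Set.indicator_of_mem hqk]
      _ ≤ ∑ j, exitWeight d L μ (T j) q :=
          Finset.single_le_sum (f := fun j => exitWeight d L μ (T j) q) (fun _ _ => zero_le)
            (Finset.mem_univ k)
  · simp [exitWeight, Set.indicator_of_notMem hq]

theorem phiSO_iInter_le_sum {ι : Type*} [Fintype ι] (T : ι → Set (Fin d → ℤ)) :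
    phiSO d L μ p (⋂ k, T k) ≤ ∑ k, phiSO d L μ p (T k) := by
  simp only [phiSO_eq_tsum_exitWeight, ← Finset.mul_sum]
  rw [← Summable.tsum_finsetSum fun _ _ => ENNReal.summable]
  gcongr with q
  exact exitWeight_iInter_le_sum T q

theorem phiSO_image_eq (e : (Fin d → ℤ) ≃ (Fin d → ℤ)) (S : Set (Fin d → ℤ))
    (hadj : ∀ x y, adjSO d L (e x) (e y) ↔ adjSO d L x y)
    (hτ : ∀ x, tauSO d L μ (e '' S) (e x) = tauSO d L μ S x) :
    phiSO d L μ p (e '' S) = phiSO d L μ p S := by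
  simp only [phiSO_eq_tsum_exitWeight]
  rw [← (e.prodCongr e).tsum_eq]
  congr 2 with q
  have hmem : (e.prodCongr e) q ∈ exitEdges d L (e '' S) ↔ q ∈ exitEdges d L S := by
    simp [exitEdges, hadj]
  by_cases hq : q ∈ exitEdges d L S
  · rw [exitWeight, exitWeight, Set.indicator_of_mem (hmem.mpr hq), Set.indicator_of_mem hq]
    exact hτ q.1
  · rw [exitWeight, exitWeight, Set.indicator_of_notMem (mt hmem.mp hq),
      Set.indicator_of_notMem hq]

end Phi

section Reflection

variable {d : ℕ} (hd : 0 < d)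

def signedSwap (i : Fin d) (s : ℤˣ) (x : Fin d → ℤ) : Fin d → ℤ :=
  fun j => s * x (Equiv.swap ⟨0, hd⟩ i j)

lemma signedSwap_involutive (i : Fin d) (s : ℤˣ) : Function.Involutive (signedSwap hd i s) := by
  intro x
  funext j
  simp [signedSwap, ← mul_assoc, ← Units.val_mul, Int.units_mul_self]

lemma isSignedPerm_signedSwap (i : Fin d) (s : ℤˣ) : IsSignedPerm d (signedSwap hd i s) :=
  ⟨Equiv.swap ⟨0, hd⟩ i, fun _ => s,
    fun _ => by rcases Int.units_eq_one_or s with rfl | rfl <;> simp, fun _ _ => rfl⟩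

lemma adjSO_signedSwap {L : ℕ} (i : Fin d) (s : ℤˣ) {x y : Fin d → ℤ} (h : adjSO d L x y) :
    adjSO d L (signedSwap hd i s x) (signedSwap hd i s y) := by
  refine ⟨(signedSwap_involutive hd i s).injective.ne h.1, fun j => ?_⟩
  simpa [signedSwap, ← mul_sub, abs_mul, Int.isUnit_iff_abs_eq.mp s.isUnit] using h.2 _

lemma adjSO_signedSwap_iff {L : ℕ} (i : Fin d) (s : ℤˣ) (x y : Fin d → ℤ) :
    adjSO d L (signedSwap hd i s x) (signedSwap hd i s y) ↔ adjSO d L x y := by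
  refine ⟨fun h => ?_, adjSO_signedSwap hd i s⟩
  simpa [signedSwap_involutive hd i s _] using adjSO_signedSwap hd i s h

lemma signedSwap_image_halfSpaceSO (i : Fin d) (s : ℤˣ) (n : ℕ) :
    signedSwap hd i s '' halfSpaceSO d hd n = {x | -(n : ℤ) ≤ s * x i} := by
  rw [(signedSwap_involutive hd i s).image_eq_preimage_symm]
  ext x
  simp [halfSpaceSO, signedSwap]

lemma boxSO_eq_iInter (n : ℕ) :
    boxSO d n = ⋂ k : Fin d × ℤˣ, {x | -(n : ℤ) ≤ k.2 * x k.1} := by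
  ext x
  simp only [boxSO, Set.mem_ofPred_eq, Set.mem_iInter, Prod.forall, abs_le]
  refine ⟨fun hx i s => ?_, fun hx i => ?_⟩
  · rcases Int.units_eq_one_or s with rfl | rfl <;> simp <;> linarith [hx i]
  · constructor
    · simpa using hx i 1
    · simpa [neg_le_neg_iff] using hx i (-1)

end Reflection

theorem phiSO_boxSO_le (d L : ℕ) (hd : 0 < d) (μ : Measure (Sym2 (Fin d → ℤ) → Bool))
    (p : ℝ≥0∞)
    (hsym : ∀ g : (Fin d → ℤ) → (Fin d → ℤ), IsSignedPerm d g →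
      ∀ (S : Set (Fin d → ℤ)) (x : Fin d → ℤ),
        tauSO d L μ (g '' S) (g x) = tauSO d L μ S x) (n : ℕ) :
    phiSO d L μ p (boxSO d n) ≤ 2 * (d : ℝ≥0∞) * phiSO d L μ p (halfSpaceSO d hd n) := by
  have hreflect : ∀ k : Fin d × ℤˣ, phiSO d L μ p {x | -(n : ℤ) ≤ k.2 * x k.1} =
      phiSO d L μ p (halfSpaceSO d hd n) := fun ⟨i, s⟩ => by
    rw [← signedSwap_image_halfSpaceSO hd i s n]
    exact phiSO_image_eq (signedSwap_involutive hd i s).toPerm _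
      (adjSO_signedSwap_iff hd i s) (hsym _ (isSignedPerm_signedSwap hd i s) _)
  calc phiSO d L μ p (boxSO d n)
      ≤ ∑ k : Fin d × ℤˣ, phiSO d L μ p {x | -(n : ℤ) ≤ k.2 * x k.1} := by
        rw [boxSO_eq_iInter]
        exact phiSO_iInter_le_sum _
    _ = 2 * (d : ℝ≥0∞) * phiSO d L μ p (halfSpaceSO d hd n) := by
        simp [hreflect, Fintype.card_units_int, mul_comm]

theorem stmt12_general (d L : ℕ) (hd : 0 < d)
    (μ : Measure (Sym2 (Fin d → ℤ) → Bool))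
    (p : ℝ≥0∞)
    (hsym : ∀ g : (Fin d → ℤ) → (Fin d → ℤ), IsSignedPerm d g →
      ∀ (S : Set (Fin d → ℤ)) (x : Fin d → ℤ),
        tauSO d L μ (g '' S) (g x) = tauSO d L μ S x) :
    (∀ n : ℕ, phiSO d L μ p (boxSO d n) ≤ 2 * (d : ℝ≥0∞) * phiSO d L μ p (halfSpaceSO d hd n)) ∧
    (∀ n : ℕ, 1 ≤ n → 1 ≤ phiSO d L μ p (boxSO d n) →
      1 / (2 * (d : ℝ≥0∞)) ≤ phiSO d L μ p (halfSpaceSO d hd n)) := by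
  refine ⟨phiSO_boxSO_le d L hd μ p hsym, fun n _ hbox => ENNReal.div_le_of_le_mul ?_⟩
  calc 1 ≤ phiSO d L μ p (boxSO d n) := hbox
    _ ≤ 2 * (d : ℝ≥0∞) * phiSO d L μ p (halfSpaceSO d hd n) := phiSO_boxSO_le d L hd μ p hsym n
    _ = _ := mul_comm _ _

/-- Lemma 2.1: by lattice symmetry, `φ_p(Λ_n) ≤ 2d φ_p(H_n)`; in particular, if
`φ_{p_c}(Λ_n) ≥ 1` then `φ_{p_c}(H_n) ≥ 1/(2d)`. -/
theorem stmt12 (d L : ℕ) (hd : 0 < d) (hL : 1 ≤ L)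
    (μ : Measure (Sym2 (Fin d → ℤ) → Bool)) [IsProbabilityMeasure μ]
    (p : ℝ≥0∞) (hp : p ≤ 1)
    (hsym : ∀ g : (Fin d → ℤ) → (Fin d → ℤ), IsSignedPerm d g →
      ∀ (S : Set (Fin d → ℤ)) (x : Fin d → ℤ),
        tauSO d L μ (g '' S) (g x) = tauSO d L μ S x) :
    (∀ n : ℕ, phiSO d L μ p (boxSO d n) ≤ 2 * (d : ℝ≥0∞) * phiSO d L μ p (halfSpaceSO d hd n)) ∧
    (∀ n : ℕ, 1 ≤ n → 1 ≤ phiSO d L μ p (boxSO d n) →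
      1 / (2 * (d : ℝ≥0∞)) ≤ phiSO d L μ p (halfSpaceSO d hd n)) :=
  stmt12_general d L hd μ p hsym
end

section
/- Let g : ℕ → [0,1] be non-increasing and suppose there exist K₂ > 0 such that for every n ≥ 2L (some fixed L ≥ 1): g(n) ≤ (1/16)·g(⌊n/2⌋) + K₂·n^{-3/2}·√(g(n)). Then there exists a constant A' > 0 (depending on K₂ and L) such that g(n) ≤ A'·n^{-3} for all n ≥ 1. -/
/-!
Absorbing the square root by AM-GM, `K₂ n^{-3/2} √g(n) ≤ g(n)/8 + 2 K₂² n^{-3}`, turns the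
hypothesis into the linear recursion `g(n) ≤ g(⌊n/2⌋)/14 + D n^{-3}`. Since `n³ ≤ 12 ⌊n/2⌋³`
for `n ≥ 8` and `12/14 < 1`, a bound `A n^{-3}` on `g(⌊n/2⌋)` reproduces itself at `n` once
`A` is large compared with `D`; below the threshold the trivial bound `g ≤ 1` suffices.
-/

open Real

theorem sub_mul_le_of_le_add_mul_sqrt {x a b ε : ℝ} (hx : 0 ≤ x) (h : x ≤ a + b * √x)
    (hε : 0 < ε) : (1 - ε) * x ≤ a + b ^ 2 / (4 * ε) := by
  have hamgm : b * √x ≤ ε * x + b ^ 2 / (4 * ε) := by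
    rw [← sub_nonneg]
    have key : ε * x + b ^ 2 / (4 * ε) - b * √x = (2 * ε * √x - b) ^ 2 / (4 * ε) := by
      field_simp
      rw [sub_sq, mul_pow, mul_pow, sq_sqrt hx]
      ring
    rw [key]
    positivity
  linarith

theorem rpow_neg_three_halves_sq {x : ℝ} (hx : 0 ≤ x) :
    (x ^ (-(3 / 2 : ℝ))) ^ 2 = 1 / x ^ 3 := by
  rw [← rpow_natCast, ← rpow_mul hx, one_div, ← rpow_natCast x 3, ← rpow_neg hx]
  norm_num

theorem cube_le_twelve_mul_cube_div_two {n : ℕ} (hn : 8 ≤ n) :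
    (n : ℝ) ^ 3 ≤ 12 * ((n / 2 : ℕ) : ℝ) ^ 3 := by
  have hhalf : (n : ℝ) ≤ 2 * ((n / 2 : ℕ) : ℝ) + 1 := by
    exact_mod_cast (by omega : n ≤ 2 * (n / 2) + 1)
  have h8 : (8 : ℝ) ≤ n := by exact_mod_cast hn
  nlinarith [sq_nonneg ((n : ℝ) - 8), sq_nonneg ((n / 2 : ℕ) : ℝ),
    sq_nonneg ((n : ℝ) - 2 * ((n / 2 : ℕ) : ℝ))]

theorem exists_le_div_cube_of_le_mul_div_two_add {g : ℕ → ℝ} {N : ℕ} {c D : ℝ}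
    (hN : 8 ≤ N) (hc₀ : 0 ≤ c) (hc : 12 * c < 1) (hg : ∀ n, g n ≤ 1)
    (hrec : ∀ n, N ≤ n → g n ≤ c * g (n / 2) + D / (n : ℝ) ^ 3) :
    ∃ A > 0, ∀ n : ℕ, 1 ≤ n → g n ≤ A / (n : ℝ) ^ 3 := by
  set A : ℝ := max ((N : ℝ) ^ 3) (D / (1 - 12 * c))
  have hNA : (N : ℝ) ^ 3 ≤ A := le_max_left _ _
  have hDA : D ≤ (1 - 12 * c) * A := by
    rw [← div_le_iff₀' (by linarith)]
    exact le_max_right _ _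
  have hA : 0 < A := lt_of_lt_of_le (by positivity) hNA
  refine ⟨A, hA, fun n => ?_⟩
  induction n using Nat.strong_induction_on with
  | _ n ih =>
    intro hn
    have hn₀ : (0 : ℝ) < n := by exact_mod_cast hn
    rcases lt_or_ge n N with hlt | hge
    · have hnN : (n : ℝ) ^ 3 ≤ (N : ℝ) ^ 3 := by gcongr
      calc g n ≤ 1 := hg n
        _ ≤ A / (n : ℝ) ^ 3 := by
          rw [one_le_div₀ (by positivity)]
          exact hnN.trans hNA
    · have hm₀ : (0 : ℝ) < ((n / 2 : ℕ) : ℝ) := by exact_mod_cast (by omega : 0 < n / 2)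
      have hgm : g (n / 2) ≤ 12 * A / (n : ℝ) ^ 3 := by
        refine (ih (n / 2) (by omega) (by omega)).trans ?_
        rw [div_le_div_iff₀ (by positivity) (by positivity)]
        have hcube := cube_le_twelve_mul_cube_div_two (hN.trans hge)
        linarith [mul_le_mul_of_nonneg_left hcube hA.le]
      calc g n ≤ c * g (n / 2) + D / (n : ℝ) ^ 3 := hrec n hge
        _ ≤ c * (12 * A / (n : ℝ) ^ 3) + D / (n : ℝ) ^ 3 := by gcongr
        _ = (12 * c * A + D) / (n : ℝ) ^ 3 := by ring
        _ ≤ A / (n : ℝ) ^ 3 := by gcongr; linarith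

theorem stmt17_general (g : ℕ → ℝ) (K₂ : ℝ) (L : ℕ)
    (hrange : ∀ n, 0 ≤ g n ∧ g n ≤ 1)
    (hrec : ∀ n : ℕ, 2 * L ≤ n →
      g n ≤ (1 / 16) * g (n / 2) + K₂ * (n : ℝ) ^ (-(3 / 2 : ℝ)) * Real.sqrt (g n)) :
    ∃ A' > 0, ∀ n : ℕ, 1 ≤ n → g n ≤ A' / (n : ℝ) ^ 3 := by
  have hlinear : ∀ n, max 8 (2 * L) ≤ n →
      g n ≤ 1 / 14 * g (n / 2) + 16 / 7 * K₂ ^ 2 / (n : ℝ) ^ 3 := by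
    intro n hn
    have habsorb := sub_mul_le_of_le_add_mul_sqrt (hrange n).1 (hrec n (le_of_max_le_right hn))
      (by norm_num : (0 : ℝ) < 1 / 8)
    rw [mul_pow, rpow_neg_three_halves_sq n.cast_nonneg] at habsorb
    linear_combination (8 / 7) * habsorb
  exact exists_le_div_cube_of_le_mul_div_two_add (le_max_left 8 (2 * L)) (by norm_num) (by norm_num)
    (fun n => (hrange n).2) hlinear

/-- Half-space induction: if `g : ℕ → [0,1]` is non-increasing and satisfies
`g(n) ≤ (1/16) g(⌊n/2⌋) + K₂ n^{-3/2} √(g(n))` for all `n ≥ 2L`, then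
`g(n) ≤ A' n^{-3}` for some constant `A' > 0` and all `n ≥ 1`. -/
theorem stmt17 (g : ℕ → ℝ) (K₂ : ℝ) (L : ℕ) (hK₂ : 0 < K₂) (hL : 1 ≤ L)
    (hrange : ∀ n, 0 ≤ g n ∧ g n ≤ 1)
    (hmono : ∀ m n : ℕ, m ≤ n → g n ≤ g m)
    (hrec : ∀ n : ℕ, 2 * L ≤ n →
      g n ≤ (1 / 16) * g (n / 2) + K₂ * (n : ℝ) ^ (-(3 / 2 : ℝ)) * Real.sqrt (g n)) :
    ∃ A' > 0, ∀ n : ℕ, 1 ≤ n → g n ≤ A' / (n : ℝ) ^ 3 :=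
  stmt17_general g K₂ L hrange hrec
end
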